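/- The function h(t) := exp(2·(log λ₁(t))² − 8t·log λ₁(t)/(t²+4) + 8), where λ₁(t) := (√(t²+4)+t)/2, is not convex on ℝ. -/

import Mathlib

/-- The larger eigenvalue `λ₁(t) = (√(t²+4)+t)/2` of the right stretch tensor of simple shear. -/
noncomputable def lam1 (t : ℝ) : ℝ := (Real.sqrt (t ^ 2 + 4) + t) / 2

/-- The additive logarithmic exponentiated Hencky energy along simple shear at the plastic
stretch `U_p = diag(e⁻², e²)`. -/
noncomputable def hEnergy (t : ℝ) : ℝ :=
  Real.exp (2 * (Real.log (lam1 t)) ^ 2 - 8 * t * Real.log (lam1 t) / (t ^ 2 + 4) + 8)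

/-!
Since `λ₁(t) λ₁(-t) = 1`, the energy `h` is even, so a convex `h` would be minimal at `0`,
where `h 0 = e⁸`. But with `L = log λ₁(2) = log (1 + √2) ∈ (0, 1)` one has
`h 2 = exp (2 L (L - 1) + 8) < e⁸`.
-/

open Real

theorem ConvexOn.apply_zero_le_of_apply_neg_eq {E : Type*} [AddCommGroup E] [Module ℝ E]
    {s : Set E} {f : E → ℝ} (hf : ConvexOn ℝ s f) {x : E} (hx : x ∈ s) (hnx : -x ∈ s)
    (heven : f (-x) = f x) : f 0 ≤ f x := by
  have hmid := hf.2 hnx hx (by norm_num : (0 : ℝ) ≤ 1 / 2) (by norm_num : (0 : ℝ) ≤ 1 / 2)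
    (by norm_num)
  have h0 : (1 / 2 : ℝ) • -x + (1 / 2 : ℝ) • x = 0 := by
    rw [smul_neg, neg_add_cancel]
  rw [h0, heven, smul_eq_mul] at hmid
  linarith

lemma lam1_mul_lam1_neg (t : ℝ) : lam1 t * lam1 (-t) = 1 := by
  have hs : √(t ^ 2 + 4) ^ 2 = t ^ 2 + 4 := Real.sq_sqrt (by positivity)
  unfold lam1
  rw [neg_sq]
  linear_combination hs / 4

lemma log_lam1_neg (t : ℝ) : log (lam1 (-t)) = -log (lam1 t) := by
  rw [← Real.log_inv, eq_inv_of_mul_eq_one_right (lam1_mul_lam1_neg t)]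

lemma hEnergy_neg (t : ℝ) : hEnergy (-t) = hEnergy t := by
  simp only [hEnergy, log_lam1_neg, neg_sq]
  ring_nf

lemma hEnergy_zero : hEnergy 0 = exp 8 := by
  have h : lam1 0 = 1 := by
    rw [lam1, show (0 : ℝ) ^ 2 + 4 = 2 ^ 2 by norm_num, Real.sqrt_sq zero_le_two]
    norm_num
  simp [hEnergy, h]

lemma lam1_two : lam1 2 = 1 + √2 := by
  rw [lam1, show (2 : ℝ) ^ 2 + 4 = 2 ^ 2 * 2 by norm_num,
    Real.sqrt_mul (by positivity), Real.sqrt_sq zero_le_two]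
  ring

lemma log_lam1_two_mem_Ioo : log (lam1 2) ∈ Set.Ioo 0 1 := by
  have hsqrt2 : √2 < 1.5 := by
    rw [Real.sqrt_lt' (by norm_num)]
    norm_num
  rw [lam1_two]
  refine ⟨Real.log_pos (lt_add_of_pos_right 1 (by positivity)), ?_⟩
  rw [Real.log_lt_iff_lt_exp (by positivity)]
  linarith [Real.exp_one_gt_d9]

lemma hEnergy_two_lt_hEnergy_zero : hEnergy 2 < hEnergy 0 := by
  obtain ⟨hL0, hL1⟩ := log_lam1_two_mem_Ioo
  rw [hEnergy_zero, hEnergy, Real.exp_lt_exp]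
  norm_num
  nlinarith [mul_pos hL0 (sub_pos.2 hL1)]

theorem stmt17 : ¬ ConvexOn ℝ Set.univ hEnergy := by
  intro hconv
  have hmin := hconv.apply_zero_le_of_apply_neg_eq (Set.mem_univ (2 : ℝ)) (Set.mem_univ (-2))
    (hEnergy_neg 2)
  exact hmin.not_gt hEnergy_two_lt_hEnergy_zero
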